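/- Price of EF1 lower bound instance: fix 0 < ε < 1/6 and consider two agents and three goods with additive values v_1 = (1/3 − 2ε, 1/3 + ε, 1/3 + ε) and v_2 = (0, 1/2, 1/2). Then (a) there exists an allocation with social welfare 4/3 − 2ε (namely g_1 to agent 1 and g_2, g_3 to agent 2), and (b) every EF1 allocation of this instance has social welfare at most 7/6 − ε. Consequently the ratio of the optimal social welfare to the best social welfare of an EF1 allocation is at least (4/3 − 2ε)/(7/6 − ε), which tends to 8/7 as ε → 0. -/
import Mathlib


open Finset Filter Topology

/-- The valuations of the two agents over the three goods:
`v_1 = (1/3 − 2ε, 1/3 + ε, 1/3 + ε)` and `v_2 = (0, 1/2, 1/2)`. -/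
noncomputable def vPoF (ε : ℝ) : Fin 2 → Fin 3 → ℝ :=
  ![![1 / 3 - 2 * ε, 1 / 3 + ε, 1 / 3 + ε], ![0, 1 / 2, 1 / 2]]

/-- The allocation giving `g_1` to agent 1 and `g_2, g_3` to agent 2. -/
def BPoF : Fin 2 → Finset (Fin 3) := ![{0}, {1, 2}]

/-- Key lemma: every EF1 allocation has social welfare in `[1/2, 7/6 − ε]`. -/
lemma ef1_sw_bounds (ε : ℝ) (hε0 : 0 < ε) (hε : ε < 1 / 6)
    (A : Fin 2 → Finset (Fin 3))
    (hpart : (∀ i j, i ≠ j → Disjoint (A i) (A j)) ∧ Finset.univ.biUnion A = Finset.univ)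
    (hef1 : ∀ i j : Fin 2, (A j).Nonempty →
        ∃ g ∈ A j, ∑ x ∈ (A j).erase g, vPoF ε i x ≤ ∑ x ∈ A i, vPoF ε i x) :
    1 / 2 ≤ ∑ i, ∑ g ∈ A i, vPoF ε i g ∧ ∑ i, ∑ g ∈ A i, vPoF ε i g ≤ 7 / 6 - ε := by
  obtain ⟨hdis, hun⟩ := hpart
  have hA1 : A 1 = (A 0)ᶜ := by
    have hd := hdis 0 1 (by decide)
    ext g
    simp only [Finset.mem_compl]
    constructor
    · intro h1 h0; exact (Finset.disjoint_left.mp hd) h0 h1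
    · intro h0
      have hg : g ∈ Finset.univ.biUnion A := by rw [hun]; exact Finset.mem_univ g
      simp only [Finset.mem_biUnion, Finset.mem_univ, true_and] at hg
      obtain ⟨i, hi⟩ := hg
      fin_cases i
      · exact absurd hi h0
      · exact hi
  obtain ⟨s, hs⟩ : ∃ s, A 0 = s := ⟨_, rfl⟩
  rw [hs] at hA1
  rw [Fin.sum_univ_two, hs, hA1]
  have hcases : ∀ t : Finset (Fin 3), t = ∅ ∨ t = {0} ∨ t = {1} ∨ t = {2} ∨
      t = {0,1} ∨ t = {0,2} ∨ t = {1,2} ∨ t = {0,1,2} := by decide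
  rcases hcases s with rfl | rfl | rfl | rfl | rfl | rfl | rfl | rfl
  · rw [show (∅ : Finset (Fin 3))ᶜ = {0,1,2} from by decide]
    simp [vPoF]
    first | (constructor <;> linarith) | linarith
  · exfalso
    have hne : (A 1).Nonempty := ⟨1, by rw [hA1]; decide⟩
    obtain ⟨g, hg, hle⟩ := hef1 0 1 hne
    rw [hA1, show ({0} : Finset (Fin 3))ᶜ = {1,2} from by decide] at hg hle
    rw [hs] at hle
    fin_cases hg <;>
    · simp [vPoF] at hle; linarith
  · rw [show ({1} : Finset (Fin 3))ᶜ = {0,2} from by decide]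
    simp [vPoF]; first | (constructor <;> linarith) | linarith
  · rw [show ({2} : Finset (Fin 3))ᶜ = {0,1} from by decide]
    simp [vPoF]; first | (constructor <;> linarith) | linarith
  · rw [show ({0,1} : Finset (Fin 3))ᶜ = {2} from by decide]
    simp [vPoF]; first | (constructor <;> linarith) | linarith
  · rw [show ({0,2} : Finset (Fin 3))ᶜ = {1} from by decide]
    simp [vPoF]; first | (constructor <;> linarith) | linarith
  · rw [show ({1,2} : Finset (Fin 3))ᶜ = {0} from by decide]
    simp [vPoF]; first | (constructor <;> linarith) | linarith
  · rw [show ({0,1,2} : Finset (Fin 3))ᶜ = ∅ from by decide]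
    simp [vPoF]; first | (constructor <;> linarith) | linarith

/-- Price of EF1 lower bound instance. (a) The allocation giving `g_1` to
agent 1 and `g_2, g_3` to agent 2 is an allocation with social welfare `4/3 − 2ε`;
(b) every EF1 allocation has social welfare at most `7/6 − ε`; consequently, the ratio of
the optimal social welfare to that of any EF1 allocation is at least
`(4/3 − 2ε)/(7/6 − ε)`, which tends to `8/7` as `ε → 0`. -/
theorem price_of_ef1_lower_bound (ε : ℝ) (hε0 : 0 < ε) (hε : ε < 1 / 6) :
    -- (a)
    ((∀ i j, i ≠ j → Disjoint (BPoF i) (BPoF j)) ∧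
      Finset.univ.biUnion BPoF = Finset.univ ∧
      ∑ i, ∑ g ∈ BPoF i, vPoF ε i g = 4 / 3 - 2 * ε) ∧
    -- (b)
    (∀ A : Fin 2 → Finset (Fin 3),
      ((∀ i j, i ≠ j → Disjoint (A i) (A j)) ∧ Finset.univ.biUnion A = Finset.univ) →
      (∀ i j : Fin 2, (A j).Nonempty →
        ∃ g ∈ A j, ∑ x ∈ (A j).erase g, vPoF ε i x ≤ ∑ x ∈ A i, vPoF ε i x) →
      ∑ i, ∑ g ∈ A i, vPoF ε i g ≤ 7 / 6 - ε) ∧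
    -- consequence: the ratio bound for every EF1 allocation
    (∀ A : Fin 2 → Finset (Fin 3),
      ((∀ i j, i ≠ j → Disjoint (A i) (A j)) ∧ Finset.univ.biUnion A = Finset.univ) →
      (∀ i j : Fin 2, (A j).Nonempty →
        ∃ g ∈ A j, ∑ x ∈ (A j).erase g, vPoF ε i x ≤ ∑ x ∈ A i, vPoF ε i x) →
      (4 / 3 - 2 * ε) / (7 / 6 - ε) ≤ (4 / 3 - 2 * ε) / (∑ i, ∑ g ∈ A i, vPoF ε i g)) ∧
    -- the ratio tends to 8/7 as ε → 0⁺
    Tendsto (fun e : ℝ => (4 / 3 - 2 * e) / (7 / 6 - e)) (𝓝[>] 0) (𝓝 (8 / 7)) := by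
  refine ⟨⟨?_, ?_, ?_⟩, ?_, ?_, ?_⟩
  · decide
  · decide
  · simp [Fin.sum_univ_two, BPoF, vPoF]
    ring
  · intro A hpart hef1
    exact (ef1_sw_bounds ε hε0 hε A hpart hef1).2
  · intro A hpart hef1
    obtain ⟨h1, h2⟩ := ef1_sw_bounds ε hε0 hε A hpart hef1
    have hpos : (0 : ℝ) < ∑ i, ∑ g ∈ A i, vPoF ε i g := by linarith
    have hnum : (0 : ℝ) ≤ 4 / 3 - 2 * ε := by linarith
    exact div_le_div_of_nonneg_left hnum hpos h2
  · have hc : ContinuousAt (fun e : ℝ => (4 / 3 - 2 * e) / (7 / 6 - e)) 0 := by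
      apply ContinuousAt.div (by fun_prop) (by fun_prop)
      norm_num
    have ht : Tendsto (fun e : ℝ => (4 / 3 - 2 * e) / (7 / 6 - e)) (𝓝[>] 0) (𝓝 ((4 / 3 - 2 * (0:ℝ)) / (7 / 6 - (0:ℝ)))) := hc.tendsto.mono_left nhdsWithin_le_nhds
    norm_num at ht
    exact ht
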